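/- arXiv:1610.08346 — 2 statements merged into one kernel-verified Lean document; each statement's English description precedes it below -/
import Mathlib

section
/- Fix $r\in\mathbb{N}_0$ and constants $c_0=1$, $c_1,\dots,c_r\in\mathbb{R}$, $c_{r+1}=0$. Let $a,b:\mathbb{Z}\times\mathbb{R}\to\mathbb{R}$ with $a(n,t)>0$ satisfy $\mathrm{TL}_r(a,b)=0$, i.e. $\dot a(n,t)=a(n,t)(g_{r+1}(n+1,t)-g_{r+1}(n,t))$ and $\dot b(n,t)=h_{r+1}(n,t)-h_{r+1}(n-1,t)$ for all $n\in\mathbb{Z}$, $t\in\mathbb{R}$. Define the reflected coefficients $\tilde a(n,t)=a(-n-1,-t)$ and $\tilde b(n,t)=b(-n,-t)$. Then $(\tilde a,\tilde b)$ again satisfies $\mathrm{TL}_r(\tilde a,\tilde b)=0$ (with the same constants $c_0,\dots,c_r$). -/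
/-- The Jacobi operator `(H f)(n) = a(n) f(n+1) + a(n-1) f(n-1) + b(n) f(n)`. -/
noncomputable def jacobiOp (a b : ℤ → ℝ) (f : ℤ → ℝ) : ℤ → ℝ :=
  fun n => a n * f (n + 1) + a (n - 1) * f (n - 1) + b n * f n

/-- The Kronecker delta sequence `δ_m`. -/
def kron (m : ℤ) : ℤ → ℝ := fun n => if n = m then 1 else 0

/-- `g̃_l(n) = ⟨δ_n, H^l δ_n⟩ = (H^l δ_n)(n)`. -/
noncomputable def gTilde (a b : ℤ → ℝ) (l : ℕ) (n : ℤ) : ℝ :=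
  (jacobiOp a b)^[l] (kron n) n

/-- `h̃_l(n) = 2 a(n) ⟨δ_{n+1}, H^l δ_n⟩ = 2 a(n) (H^l δ_n)(n+1)`. -/
noncomputable def hTilde (a b : ℤ → ℝ) (l : ℕ) (n : ℤ) : ℝ :=
  2 * a n * ((jacobiOp a b)^[l] (kron n) (n + 1))

/-- `g_j(n) = ∑_{l=0}^{j} c_{j-l} g̃_l(n)`. -/
noncomputable def gCoef (c : ℕ → ℝ) (a b : ℤ → ℝ) (j : ℕ) (n : ℤ) : ℝ :=
  ∑ l ∈ Finset.range (j + 1), c (j - l) * gTilde a b l n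

/-- `h_j(n) = ∑_{l=0}^{j} c_{j-l} h̃_l(n)`. -/
noncomputable def hCoef (c : ℕ → ℝ) (a b : ℤ → ℝ) (j : ℕ) (n : ℤ) : ℝ :=
  ∑ l ∈ Finset.range (j + 1), c (j - l) * hTilde a b l n

/-- The `r`-th equation of the Toda hierarchy, `TL_r(a,b) = 0`:
`ȧ(n,t) = a(n,t) (g_{r+1}(n+1,t) - g_{r+1}(n,t))`,
`ḃ(n,t) = h_{r+1}(n,t) - h_{r+1}(n-1,t)`. -/
def TodaHierarchyEq (r : ℕ) (c : ℕ → ℝ) (a b : ℤ → ℝ → ℝ) : Prop :=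
  ∀ (n : ℤ) (t : ℝ),
    HasDerivAt (fun s => a n s)
      (a n t * (gCoef c (fun m => a m t) (fun m => b m t) (r + 1) (n + 1)
        - gCoef c (fun m => a m t) (fun m => b m t) (r + 1) n)) t ∧
    HasDerivAt (fun s => b n s)
      (hCoef c (fun m => a m t) (fun m => b m t) (r + 1) n
        - hCoef c (fun m => a m t) (fun m => b m t) (r + 1) (n - 1)) t

/-!
The Jacobi operator is symmetric, `(Hˡ δ_m)(k) = (Hˡ δ_k)(m)`, and the reflection
`R f = f ∘ (-·)` intertwines the reflected operator `H̃` with `H`: `R H̃ = H R`. Hence `g̃_l(n)`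
and `h̃_l(n)` of the reflected coefficients equal `g̃_l(-n)` and `h̃_l(-n-1)` of the original
ones (the latter after the symmetry swaps `δ_{-n}` and `δ_{-n-1}`). The chain rule for `t ↦ -t`
then finishes: the sign from reversing time cancels the sign from reversing the spatial
differences.
-/

lemma HasDerivAt.comp_neg {𝕜 F : Type*} [NontriviallyNormedField 𝕜] [NormedAddCommGroup F]
    [NormedSpace 𝕜 F] {f : 𝕜 → F} {f' : F} {x : 𝕜} (h : HasDerivAt f f' (-x)) :
    HasDerivAt (fun s => f (-s)) (-f') x := by
  simpa [Function.comp_def] using h.scomp x (hasDerivAt_neg x)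

namespace JacobiOp

noncomputable def toEnd (a b : ℤ → ℝ) : Module.End ℝ (ℤ → ℝ) where
  toFun := jacobiOp a b
  map_add' f g := by funext n; simp only [jacobiOp, Pi.add_apply]; ring
  map_smul' x f := by
    funext n; simp only [jacobiOp, Pi.smul_apply, smul_eq_mul, RingHom.id_apply]; ring

lemma iterate_eq_toEnd_pow (a b : ℤ → ℝ) (l : ℕ) (f : ℤ → ℝ) :
    (jacobiOp a b)^[l] f = (toEnd a b ^ l) f := by
  rw [Module.End.pow_apply]
  rfl

lemma apply_kron (a b : ℤ → ℝ) (k : ℤ) :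
    jacobiOp a b (kron k) = a k • kron (k + 1) + a (k - 1) • kron (k - 1) + b k • kron k := by
  funext j
  simp only [jacobiOp, kron, Pi.add_apply, Pi.smul_apply, smul_eq_mul]
  split_ifs <;> first | (exfalso; omega) | (subst_vars; ring_nf)

lemma iterate_kron_comm (a b : ℤ → ℝ) (l : ℕ) (m k : ℤ) :
    (jacobiOp a b)^[l] (kron m) k = (jacobiOp a b)^[l] (kron k) m := by
  induction l generalizing m k with
  | zero => simp only [Function.iterate_zero, id, kron, eq_comm]
  | succ l ih =>
    conv_rhs =>
      rw [Function.iterate_succ_apply, apply_kron, iterate_eq_toEnd_pow]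
      simp only [map_add, map_smul]
    simp only [Function.iterate_succ_apply', Pi.add_apply, Pi.smul_apply, smul_eq_mul,
      ← iterate_eq_toEnd_pow, jacobiOp, ih m]

lemma semiconj_reflect (a b : ℤ → ℝ) :
    Function.Semiconj (fun f : ℤ → ℝ => f ∘ Neg.neg)
      (jacobiOp (fun m => a (-m - 1)) (fun m => b (-m))) (jacobiOp a b) := by
  intro f
  funext n
  simp only [Function.comp, jacobiOp, neg_neg]
  rw [show -(-n - 1) - 1 = n by ring, show -(n + 1) = -n - 1 by ring,
    show -(n - 1) = -n + 1 by ring]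
  ring

lemma iterate_reflect_apply (a b : ℤ → ℝ) (l : ℕ) (f : ℤ → ℝ) (n : ℤ) :
    (jacobiOp (fun m => a (-m - 1)) (fun m => b (-m)))^[l] f n
      = (jacobiOp a b)^[l] (f ∘ Neg.neg) (-n) := by
  simpa [Function.comp] using congr_fun ((semiconj_reflect a b).iterate_right l f) (-n)

end JacobiOp

open JacobiOp

lemma kron_comp_neg (n : ℤ) : kron n ∘ Neg.neg = kron (-n) := by
  funext j
  simp only [Function.comp, kron, neg_eq_iff_eq_neg]

lemma gTilde_reflect (a b : ℤ → ℝ) (l : ℕ) (n : ℤ) :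
    gTilde (fun m => a (-m - 1)) (fun m => b (-m)) l n = gTilde a b l (-n) := by
  rw [gTilde, iterate_reflect_apply, kron_comp_neg, gTilde]

lemma hTilde_reflect (a b : ℤ → ℝ) (l : ℕ) (n : ℤ) :
    hTilde (fun m => a (-m - 1)) (fun m => b (-m)) l n = hTilde a b l (-n - 1) := by
  rw [hTilde, iterate_reflect_apply, kron_comp_neg, iterate_kron_comm, hTilde,
    show -(n + 1) = -n - 1 by ring, sub_add_cancel]

lemma gCoef_reflect (c : ℕ → ℝ) (a b : ℤ → ℝ) (j : ℕ) (n : ℤ) :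
    gCoef c (fun m => a (-m - 1)) (fun m => b (-m)) j n = gCoef c a b j (-n) := by
  simp only [gCoef, gTilde_reflect]

lemma hCoef_reflect (c : ℕ → ℝ) (a b : ℤ → ℝ) (j : ℕ) (n : ℤ) :
    hCoef c (fun m => a (-m - 1)) (fun m => b (-m)) j n = hCoef c a b j (-n - 1) := by
  simp only [hCoef, hTilde_reflect]

theorem toda_hierarchy_reflection_general
    (r : ℕ) (c : ℕ → ℝ)
    (a b : ℤ → ℝ → ℝ)
    (heq : TodaHierarchyEq r c a b) :
    TodaHierarchyEq r c (fun n t => a (-n - 1) (-t)) (fun n t => b (-n) (-t)) := by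
  intro n t
  have hg := gCoef_reflect c (fun m => a m (-t)) (fun m => b m (-t)) (r + 1)
  have hh := hCoef_reflect c (fun m => a m (-t)) (fun m => b m (-t)) (r + 1)
  constructor
  · refine (heq (-n - 1) (-t)).1.comp_neg.congr_deriv ?_
    rw [hg, hg, show -(n + 1) = -n - 1 by ring, sub_add_cancel]
    ring
  · refine (heq (-n) (-t)).2.comp_neg.congr_deriv ?_
    rw [hh, hh, show -(n - 1) - 1 = -n by ring]
    ring

/-- **Reflection symmetry of the Toda hierarchy:** if `TL_r(a,b) = 0`, then the reflected
coefficients `ã(n,t) = a(-n-1,-t)`, `b̃(n,t) = b(-n,-t)` satisfy `TL_r(ã,b̃) = 0`. -/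
theorem toda_hierarchy_reflection
    (r : ℕ) (c : ℕ → ℝ) (hc0 : c 0 = 1) (hcr : c (r + 1) = 0)
    (a b : ℤ → ℝ → ℝ)
    (hpos : ∀ n t, 0 < a n t)
    (heq : TodaHierarchyEq r c a b) :
    TodaHierarchyEq r c (fun n t => a (-n - 1) (-t)) (fun n t => b (-n) (-t)) :=
  toda_hierarchy_reflection_general r c a b heq
end

section
/- Let $R>0$ and let $f$ be holomorphic on $\{z\in\mathbb{C}:|z|>R\}$, not identically zero, and of exponential type, i.e. there exist $\sigma>0$ and $R'\geq R$ such that $|f(z)|<\exp(\sigma|z|)$ for all $|z|>R'$. Define the indicator function $h_f(\varphi)=\limsup_{r\to\infty}\frac{\log|f(r\mathrm{e}^{\mathrm{i}\varphi})|}{r}$ for $\varphi\in[0,2\pi]$. Then for every $\varphi\in[0,\pi]$ one has $h_f(\varphi)+h_f(\pi+\varphi)\geq 0$. (In particular the classical inequality for entire functions of exponential type, proved via the Phragmén–Lindelöf theorem, continues to hold for functions holomorphic only outside a disc.) -/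
/-!
Suppose `h_f(φ) + h_f(π + φ) < 0` and pick reals `A > h_f(φ)`, `B > h_f(π + φ)` with
`A + B = -c < 0`. Then `P(z) = f(e^{iφ} z) f(-e^{iφ} z)` is of exponential type outside a disc and
is `O(e^{-c|x|})` along both halves of the real axis. Phragmén–Lindelöf in quarter-planes (made to
work outside a disc by the damping factor `exp (-δ e^{-3πi/8} z^{3/2})` and the maximum modulus
principle on truncated quadrants) turns a bound `e^{a r}` on the imaginary axis into
`e^{(a - c) r}`; iterating, `P(z) = O(e^{-c|z|})` in every direction. Then `w ↦ P(1/w)` has a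
removable zero of infinite order at `0`, so `P` vanishes near `∞`, and the identity theorem on the
connected exterior forces `f ≡ 0`.
-/

/-- The indicator function of a function holomorphic outside a disc:
`h_f(φ) = limsup_{r → ∞} log |f(r e^{iφ})| / r`, with values in `[-∞, ∞]`. -/
noncomputable def indicatorFn (f : ℂ → ℂ) (φ : ℝ) : EReal :=
  Filter.limsup
    (fun r : ℝ =>
      ((Real.log (‖f ((r : ℂ) * Complex.exp (Complex.I * (φ : ℂ)))‖ ) / r : ℝ) : EReal))
    Filter.atTop

/-- `f` is holomorphic on `{|z| > R}` and of exponential type there. -/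
def ExpTypeOutsideDisc (R : ℝ) (f : ℂ → ℂ) : Prop :=
  DifferentiableOn ℂ f {z : ℂ | R < ‖z‖} ∧
    ∃ σ > 0, ∃ R' ≥ R, ∀ z : ℂ, R' < ‖z‖ →
      ‖f z‖ < Real.exp (σ * ‖z‖)

open Asymptotics Bornology Complex Filter Set Topology
open scoped Real

lemma indicatorFn_le {f : ℂ → ℂ} {φ σ : ℝ} (hσ : 0 ≤ σ)
    (h : ∀ᶠ r : ℝ in atTop, ‖f (r * exp (I * φ))‖ ≤ Real.exp (σ * r)) : indicatorFn f φ ≤ σ := by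
  refine limsup_le_of_le (by isBoundedDefault) ?_
  filter_upwards [h, eventually_gt_atTop 0] with r hr hr0
  rw [EReal.coe_le_coe_iff, div_le_iff₀ hr0]
  rcases (norm_nonneg (f (r * exp (I * φ)))).eq_or_lt with h0 | h0
  · rw [← h0, Real.log_zero]; positivity
  · exact (Real.log_le_log h0 hr).trans_eq (Real.log_exp _)

lemma eventually_norm_le_of_indicatorFn_lt {f : ℂ → ℂ} {φ A : ℝ} (h : indicatorFn f φ < A) :
    ∀ᶠ r : ℝ in atTop, ‖f (r * exp (I * φ))‖ ≤ Real.exp (A * r) := by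
  filter_upwards [eventually_lt_of_limsup_lt h, eventually_gt_atTop 0] with r hr hr0
  have := (div_lt_iff₀ hr0).1 (EReal.coe_lt_coe_iff.1 hr)
  exact (Real.le_exp_log _).trans (Real.exp_le_exp.2 (by linarith))

lemma ExpTypeOutsideDisc.indicatorFn_ne_top {R : ℝ} {f : ℂ → ℂ} (hf : ExpTypeOutsideDisc R f)
    (φ : ℝ) : indicatorFn f φ ≠ ⊤ := by
  obtain ⟨-, σ, hσ, R', -, hgrow⟩ := hf
  refine ne_top_of_le_ne_top (EReal.coe_ne_top σ) (indicatorFn_le hσ.le ?_)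
  filter_upwards [eventually_gt_atTop (max R' 0)] with r hr
  have hr' : ‖(r : ℂ) * exp (I * φ)‖ = r := by
    rw [norm_mul, norm_exp_I_mul_ofReal, norm_real, Real.norm_of_nonneg (by grind), mul_one]
  have := hgrow _ (by rw [hr']; exact lt_of_le_of_lt (le_max_left _ _) hr)
  rw [hr'] at this
  exact this.le

/-- `exp (-δ e^{-3πi/8} z^{3/2})`, principal branch. -/
noncomputable def quadrantDamping (δ : ℝ) (z : ℂ) : ℂ :=
  exp (-(δ * exp (3 / 2 * log z - (3 * π / 8 : ℝ) * I)))

lemma norm_quadrantDamping (δ : ℝ) {z : ℂ} (hz : z ≠ 0) :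
    ‖quadrantDamping δ z‖ =
      Real.exp (-(δ * ‖z‖ ^ (3 / 2 : ℝ) * Real.cos (3 / 2 * arg z - 3 * π / 8))) := by
  have hre : (3 / 2 * log z - (3 * π / 8 : ℝ) * I).re = 3 / 2 * Real.log ‖z‖ := by
    simp [log_re]
  have him : (3 / 2 * log z - (3 * π / 8 : ℝ) * I).im = 3 / 2 * arg z - 3 * π / 8 := by
    simp [log_im]
  rw [quadrantDamping, norm_exp, neg_re, re_ofReal_mul, exp_re, hre, him,
    Real.rpow_def_of_pos (norm_pos_iff.2 hz), mul_comm (Real.log _), mul_assoc]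

lemma cos_three_pi_div_eight_pos : 0 < Real.cos (3 * π / 8) :=
  Real.cos_pos_of_mem_Ioo ⟨by linarith [Real.pi_pos], by linarith [Real.pi_pos]⟩

lemma norm_quadrantDamping_le {δ : ℝ} (hδ : 0 ≤ δ) {z : ℂ} (hz : z ≠ 0) (hre : 0 ≤ z.re)
    (him : 0 ≤ z.im) :
    ‖quadrantDamping δ z‖ ≤ Real.exp (-(δ * Real.cos (3 * π / 8) * ‖z‖ ^ (3 / 2 : ℝ))) := by
  have harg₀ : 0 ≤ arg z := arg_nonneg_iff.2 him
  have harg₁ : arg z ≤ π / 2 := arg_le_pi_div_two_iff.2 (.inl hre)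
  have hcos : Real.cos (3 * π / 8) ≤ Real.cos (3 / 2 * arg z - 3 * π / 8) := by
    rw [← Real.cos_abs (3 / 2 * arg z - 3 * π / 8)]
    refine Real.cos_le_cos_of_nonneg_of_le_pi (abs_nonneg _) (by linarith [Real.pi_pos]) ?_
    rw [abs_le]; constructor <;> linarith
  rw [norm_quadrantDamping δ hz, Real.exp_le_exp, neg_le_neg_iff, mul_right_comm]
  exact mul_le_mul_of_nonneg_left hcos (by positivity)

lemma exp_le_norm_quadrantDamping {δ : ℝ} (hδ : 0 ≤ δ) {z : ℂ} (hz : z ≠ 0) :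
    Real.exp (-(δ * ‖z‖ ^ (3 / 2 : ℝ))) ≤ ‖quadrantDamping δ z‖ := by
  rw [norm_quadrantDamping δ hz, Real.exp_le_exp, neg_le_neg_iff]
  exact mul_le_of_le_one_right (by positivity) (Real.cos_le_one _)

lemma differentiableAt_quadrantDamping (δ : ℝ) {z : ℂ} (hz : z ∈ slitPlane) :
    DifferentiableAt ℂ (quadrantDamping δ) z := by
  unfold quadrantDamping
  fun_prop (disch := exact hz)

lemma mem_slitPlane_of_re_nonneg {z : ℂ} (hz : z ≠ 0) (hre : 0 ≤ z.re) : z ∈ slitPlane :=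
  mem_slitPlane_iff_arg.2 ⟨((arg_le_pi_div_two_iff.2 (.inl hre)).trans_lt
    (by linarith [Real.pi_pos])).ne, hz⟩

lemma eventually_mul_le_mul_rpow {B k : ℝ} (hk : 0 < k) :
    ∀ᶠ ρ : ℝ in atTop, B * ρ ≤ k * ρ ^ (3 / 2 : ℝ) := by
  filter_upwards [(tendsto_rpow_atTop (by norm_num : (0 : ℝ) < 1 / 2)).eventually_ge_atTop (B / k),
    eventually_gt_atTop 0] with ρ hρ hρ₀
  rw [show (3 / 2 : ℝ) = 1 + 1 / 2 by norm_num, Real.rpow_add hρ₀, Real.rpow_one,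
    mul_left_comm, mul_comm B]
  exact mul_le_mul_of_nonneg_left ((div_le_iff₀' hk).1 hρ) hρ₀.le

def truncatedQuadrant (r₁ ρ : ℝ) : Set ℂ := {z | 0 < z.re ∧ 0 < z.im ∧ r₁ < ‖z‖ ∧ ‖z‖ < ρ}

lemma isOpen_truncatedQuadrant (r₁ ρ : ℝ) : IsOpen (truncatedQuadrant r₁ ρ) :=
  (isOpen_lt continuous_const continuous_re).inter <|
    (isOpen_lt continuous_const continuous_im).inter <|
    (isOpen_lt continuous_const continuous_norm).inter (isOpen_lt continuous_norm continuous_const)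

lemma closure_truncatedQuadrant_subset (r₁ ρ : ℝ) :
    closure (truncatedQuadrant r₁ ρ) ⊆ {z | 0 ≤ z.re ∧ 0 ≤ z.im ∧ r₁ ≤ ‖z‖ ∧ ‖z‖ ≤ ρ} :=
  closure_minimal (fun _ ⟨h₁, h₂, h₃, h₄⟩ => ⟨h₁.le, h₂.le, h₃.le, h₄.le⟩) <|
    (isClosed_le continuous_const continuous_re).inter <|
    (isClosed_le continuous_const continuous_im).inter <|
    (isClosed_le continuous_const continuous_norm).inter
    (isClosed_le continuous_norm continuous_const)

lemma frontier_truncatedQuadrant_subset (r₁ ρ : ℝ) :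
    frontier (truncatedQuadrant r₁ ρ) ⊆ {z | (0 ≤ z.re ∧ 0 ≤ z.im ∧ r₁ ≤ ‖z‖ ∧ ‖z‖ ≤ ρ) ∧
      (z.re = 0 ∨ z.im = 0 ∨ ‖z‖ = r₁ ∨ ‖z‖ = ρ)} := by
  rw [(isOpen_truncatedQuadrant r₁ ρ).frontier_eq]
  rintro z ⟨hz, hzU⟩
  obtain ⟨hre, him, hr₁, hρ⟩ := closure_truncatedQuadrant_subset r₁ ρ hz
  simp only [truncatedQuadrant, mem_ofPred_eq, not_and_or, not_lt] at hzU
  refine ⟨⟨hre, him, hr₁, hρ⟩, ?_⟩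
  rcases hzU with h | h | h | h
  exacts [.inl (le_antisymm h hre), .inr (.inl (le_antisymm h him)),
    .inr (.inr (.inl (le_antisymm h hr₁))), .inr (.inr (.inr (le_antisymm hρ h)))]

/-- The damping factor makes `G · quadrantDamping δ` at most `1` on the outer arc once `ρ` is
large, so the maximum modulus principle on `truncatedQuadrant r₁ ρ` applies. -/
lemma eventually_norm_mul_quadrantDamping_le {G : ℂ → ℂ} {s B M r₁ δ : ℝ} (hr₁ : 0 < r₁)
    (hsr : s < r₁) (hd : DifferentiableOn ℂ G {z | s < ‖z‖})
    (hB : ∀ z, s < ‖z‖ → ‖G z‖ ≤ Real.exp (B * ‖z‖)) (hM : 1 ≤ M)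
    (hedge : ∀ z : ℂ, 0 ≤ z.re → 0 ≤ z.im → r₁ ≤ ‖z‖ → z.re = 0 ∨ z.im = 0 ∨ ‖z‖ = r₁ →
      ‖G z‖ ≤ M) (hδ : 0 < δ) :
    ∀ᶠ ρ in atTop, ∀ z ∈ truncatedQuadrant r₁ ρ, ‖G z * quadrantDamping δ z‖ ≤ M := by
  filter_upwards [eventually_mul_le_mul_rpow (B := B) (mul_pos hδ cos_three_pi_div_eight_pos)]
    with ρ hρ z hz
  have hA : ∀ z ∈ closure (truncatedQuadrant r₁ ρ), z ≠ 0 ∧ 0 ≤ z.re ∧ 0 ≤ z.im ∧ s < ‖z‖ :=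
    fun z hz => by
      obtain ⟨hre, him, hr, -⟩ := closure_truncatedQuadrant_subset r₁ ρ hz
      exact ⟨norm_pos_iff.1 (hr₁.trans_le hr), hre, him, hsr.trans_le hr⟩
  have hdiff : DiffContOnCl ℂ (fun z => G z * quadrantDamping δ z) (truncatedQuadrant r₁ ρ) := by
    refine DifferentiableOn.diffContOnCl fun z hz => ?_
    obtain ⟨hz0, hre, -, hsz⟩ := hA z hz
    exact ((hd z hsz).mono fun w hw => (hA w hw).2.2.2).mul (differentiableAt_quadrantDamping δ
      (mem_slitPlane_of_re_nonneg hz0 hre)).differentiableWithinAt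
  refine Complex.norm_le_of_forall_mem_frontier_norm_le
    ((Metric.isBounded_ball (x := (0 : ℂ)) (r := ρ)).subset fun z hz => by simpa using hz.2.2.2)
    hdiff (fun z hz => ?_) (subset_closure hz)
  obtain ⟨⟨hre, him, hr, -⟩, hedge'⟩ := frontier_truncatedQuadrant_subset r₁ ρ hz
  have hdamp := norm_quadrantDamping_le hδ.le (norm_pos_iff.1 (hr₁.trans_le hr)) hre him
  rw [norm_mul]
  by_cases hout : ‖z‖ = ρ
  · calc ‖G z‖ * ‖quadrantDamping δ z‖
        ≤ Real.exp (B * ‖z‖) * Real.exp (-(δ * Real.cos (3 * π / 8) * ‖z‖ ^ (3 / 2 : ℝ))) :=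
          mul_le_mul (hB z (hsr.trans_le hr)) hdamp (norm_nonneg _) (Real.exp_pos _).le
      _ ≤ 1 := by rw [← Real.exp_add, Real.exp_le_one_iff, hout]; linarith
      _ ≤ M := hM
  · have hd1 : ‖quadrantDamping δ z‖ ≤ 1 :=
      hdamp.trans <| Real.exp_le_one_iff.2 <| neg_nonpos.2 <|
        mul_nonneg (mul_pos hδ cos_three_pi_div_eight_pos).le (by positivity)
    calc ‖G z‖ * ‖quadrantDamping δ z‖ ≤ M * 1 :=
          mul_le_mul (hedge z hre him hr (by tauto)) hd1 (norm_nonneg _) (by linarith)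
      _ = M := mul_one M

lemma le_of_forall_pos_le_mul_exp {x M T : ℝ} (h : ∀ δ > 0, x ≤ M * Real.exp (δ * T)) : x ≤ M := by
  have hlim : Tendsto (fun δ => M * Real.exp (δ * T)) (𝓝[>] 0) (𝓝 M) := by
    have : Continuous fun δ => M * Real.exp (δ * T) := by fun_prop
    simpa using (this.tendsto 0).mono_left nhdsWithin_le_nhds
  exact ge_of_tendsto hlim (eventually_nhdsWithin_of_forall h)

/-- Phragmén–Lindelöf for the first quadrant. -/
lemma exists_norm_le_of_quadrant {G : ℂ → ℂ} {s B C r₁ : ℝ} (hr₁ : 0 < r₁) (hsr : s < r₁)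
    (hd : DifferentiableOn ℂ G {z | s < ‖z‖}) (hB : ∀ z, s < ‖z‖ → ‖G z‖ ≤ Real.exp (B * ‖z‖))
    (hre : ∀ x : ℝ, r₁ ≤ x → ‖G x‖ ≤ C) (him : ∀ x : ℝ, r₁ ≤ x → ‖G (x * I)‖ ≤ C) :
    ∃ M, ∀ z : ℂ, 0 ≤ z.re → 0 ≤ z.im → r₁ ≤ ‖z‖ → ‖G z‖ ≤ M := by
  obtain ⟨C₀, hC₀⟩ := (isCompact_sphere (0 : ℂ) r₁).exists_bound_of_continuousOn
    (hd.continuousOn.mono fun z hz => by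
      rw [mem_sphere_zero_iff_norm] at hz; rw [mem_ofPred_eq, hz]; exact hsr)
  set M := max (max C C₀) 1
  have hCM : C ≤ M := (le_max_left _ _).trans (le_max_left _ _)
  have hedge : ∀ z : ℂ, 0 ≤ z.re → 0 ≤ z.im → r₁ ≤ ‖z‖ → z.re = 0 ∨ z.im = 0 ∨ ‖z‖ = r₁ →
      ‖G z‖ ≤ M := by
    rintro z hre₀ him₀ hr (h | h | h)
    · have hz : (z.im : ℂ) * I = z := by apply Complex.ext <;> simp [h]
      have hn : ‖z‖ = z.im := by rw [← hz]; simp [abs_of_nonneg him₀]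
      rw [← hz]; exact (him _ (hn ▸ hr)).trans hCM
    · have hz : (z.re : ℂ) = z := by apply Complex.ext <;> simp [h]
      have hn : ‖z‖ = z.re := by rw [← hz]; simp [abs_of_nonneg hre₀]
      rw [← hz]; exact (hre _ (hn ▸ hr)).trans hCM
    · exact (hC₀ z (mem_sphere_zero_iff_norm.2 h)).trans
        ((le_max_right _ _).trans (le_max_left _ _))
  refine ⟨M, fun z hre₀ him₀ hr => ?_⟩
  by_cases hz : z.re = 0 ∨ z.im = 0 ∨ ‖z‖ = r₁
  · exact hedge z hre₀ him₀ hr hz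
  push Not at hz
  obtain ⟨hre', him', hr'⟩ := hz
  have hz0 : z ≠ 0 := fun h => hre' (by simp [h])
  refine le_of_forall_pos_le_mul_exp (T := ‖z‖ ^ (3 / 2 : ℝ)) fun δ hδ => ?_
  obtain ⟨ρ, hρ, hzρ⟩ := ((eventually_norm_mul_quadrantDamping_le hr₁ hsr hd hB
    (le_max_right _ _) hedge hδ).and (eventually_gt_atTop ‖z‖)).exists
  have h := hρ z ⟨hre₀.lt_of_ne' hre', him₀.lt_of_ne' him', hr.lt_of_ne' hr', hzρ⟩
  rw [← mul_inv_le_iff₀ (Real.exp_pos _), ← Real.exp_neg]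
  calc ‖G z‖ * Real.exp (-(δ * ‖z‖ ^ (3 / 2 : ℝ)))
      ≤ ‖G z‖ * ‖quadrantDamping δ z‖ :=
        mul_le_mul_of_nonneg_left (exp_le_norm_quadrantDamping hδ.le hz0) (norm_nonneg _)
    _ ≤ M := by rwa [← norm_mul]

noncomputable def alongRay (F : ℂ → ℂ) (θ : ℝ) (r : ℝ) : ℂ := F (r * exp (θ * I))

lemma norm_ofReal_mul_exp_ofReal_mul_I {r : ℝ} (hr : 0 ≤ r) (θ : ℝ) :
    ‖(r : ℂ) * exp (θ * I)‖ = r := by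
  rw [norm_mul, norm_exp_ofReal_mul_I, norm_real, Real.norm_of_nonneg hr, mul_one]

/-- Rotates the sector `[θ₁, θ₁ + π/2]` onto the first quadrant and divides by
`exp ((a - b i) ζ)`, whose modulus on the ray of angle `Δ` is `exp ((a cos Δ + b sin Δ) r)`. -/
noncomputable def sectorTwist (F : ℂ → ℂ) (θ₁ a b : ℝ) (ζ : ℂ) : ℂ :=
  F (exp (θ₁ * I) * ζ) * exp (-((a - b * I) * ζ))

lemma norm_sectorTwist_ofReal_mul_exp (F : ℂ → ℂ) (θ₁ a b r Δ : ℝ) :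
    ‖sectorTwist F θ₁ a b (r * exp (Δ * I))‖ =
      ‖alongRay F (θ₁ + Δ) r‖ * Real.exp (-((a * Real.cos Δ + b * Real.sin Δ) * r)) := by
  have hrot : exp (θ₁ * I) * (r * exp (Δ * I)) = r * exp (↑(θ₁ + Δ) * I) := by
    rw [mul_left_comm, ← exp_add]; push_cast; ring_nf
  have hre : ((a - b * I) * (r * exp (Δ * I))).re = (a * Real.cos Δ + b * Real.sin Δ) * r := by
    simp only [mul_re, mul_im, sub_re, sub_im, ofReal_re, ofReal_im, I_re, I_im,
      exp_ofReal_mul_I_re, exp_ofReal_mul_I_im]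
    ring
  rw [sectorTwist, norm_mul, norm_exp, neg_re, hre, hrot, alongRay]

lemma differentiableOn_sectorTwist {F : ℂ → ℂ} {s : ℝ} (hd : DifferentiableOn ℂ F {z | s < ‖z‖})
    (θ₁ a b : ℝ) : DifferentiableOn ℂ (sectorTwist F θ₁ a b) {z | s < ‖z‖} :=
  (hd.comp (by fun_prop) fun ζ hζ => by
    rwa [mem_ofPred_eq, norm_mul, norm_exp_ofReal_mul_I, one_mul]).mul (by fun_prop)

lemma norm_sectorTwist_le {F : ℂ → ℂ} {s B : ℝ} (hB : ∀ z, s < ‖z‖ → ‖F z‖ ≤ Real.exp (B * ‖z‖))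
    (θ₁ a b : ℝ) {ζ : ℂ} (hζ : s < ‖ζ‖) :
    ‖sectorTwist F θ₁ a b ζ‖ ≤ Real.exp ((B + ‖a - b * I‖) * ‖ζ‖) := by
  have hrot : ‖exp (θ₁ * I) * ζ‖ = ‖ζ‖ := by rw [norm_mul, norm_exp_ofReal_mul_I, one_mul]
  rw [sectorTwist, norm_mul, norm_exp, add_mul, Real.exp_add]
  refine mul_le_mul (hrot ▸ hB _ (hrot ▸ hζ)) ?_ (Real.exp_pos _).le (Real.exp_pos _).le
  rw [Real.exp_le_exp, ← norm_mul]
  exact (re_le_norm _).trans (norm_neg _).le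

lemma norm_sectorTwist_le_of_alongRay {F : ℂ → ℂ} {θ₁ a b r Δ C : ℝ}
    (h : ‖alongRay F (θ₁ + Δ) r‖ ≤ C * ‖Real.exp ((a * Real.cos Δ + b * Real.sin Δ) * r)‖) :
    ‖sectorTwist F θ₁ a b (r * exp (Δ * I))‖ ≤ C := by
  rw [norm_sectorTwist_ofReal_mul_exp, Real.exp_neg, ← div_eq_mul_inv, div_le_iff₀ (Real.exp_pos _)]
  rwa [Real.norm_of_nonneg (Real.exp_pos _).le] at h

lemma norm_sectorTwist_ofReal_le {F : ℂ → ℂ} {θ₁ a b x C : ℝ}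
    (h : ‖alongRay F θ₁ x‖ ≤ C * ‖Real.exp (a * x)‖) : ‖sectorTwist F θ₁ a b x‖ ≤ C := by
  have := norm_sectorTwist_le_of_alongRay (b := b) (Δ := 0) (by simpa using h)
  rwa [ofReal_zero, zero_mul, exp_zero, mul_one] at this

lemma norm_sectorTwist_ofReal_mul_I_le {F : ℂ → ℂ} {θ₁ a b x C : ℝ}
    (h : ‖alongRay F (θ₁ + π / 2) x‖ ≤ C * ‖Real.exp (b * x)‖) :
    ‖sectorTwist F θ₁ a b (x * I)‖ ≤ C := by
  have := norm_sectorTwist_le_of_alongRay (a := a) (Δ := π / 2) (by simpa using h)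
  rwa [ofReal_div, ofReal_ofNat, exp_pi_div_two_mul_I] at this

/-- Phragmén–Lindelöf for a sector of opening `π/2`. -/
lemma exists_norm_le_of_sector {F : ℂ → ℂ} {s B a b θ₁ : ℝ}
    (hd : DifferentiableOn ℂ F {z | s < ‖z‖}) (hB : ∀ z, s < ‖z‖ → ‖F z‖ ≤ Real.exp (B * ‖z‖))
    (ha : alongRay F θ₁ =O[atTop] fun r => Real.exp (a * r))
    (hb : alongRay F (θ₁ + π / 2) =O[atTop] fun r => Real.exp (b * r)) :
    ∃ M, ∀ᶠ r : ℝ in atTop, ∀ θ ∈ Icc θ₁ (θ₁ + π / 2),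
      ‖alongRay F θ r‖ ≤ M * Real.exp ((a * Real.cos (θ - θ₁) + b * Real.sin (θ - θ₁)) * r) := by
  obtain ⟨Ca, hCa⟩ := ha.bound
  obtain ⟨Cb, hCb⟩ := hb.bound
  obtain ⟨r₀, hr₀⟩ := eventually_atTop.1 (hCa.and hCb)
  set r₁ := max r₀ (max s 0 + 1)
  have hsr : s < r₁ := by grind
  have hr₁ : 0 < r₁ := by grind
  obtain ⟨M, hM⟩ := exists_norm_le_of_quadrant hr₁ hsr (differentiableOn_sectorTwist hd θ₁ a b)
    (fun ζ hζ => norm_sectorTwist_le hB θ₁ a b hζ) (C := max Ca Cb)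
    (fun x hx => norm_sectorTwist_ofReal_le <|
      (hr₀ x (le_of_max_le_left hx)).1.trans (by gcongr; exact le_max_left _ _))
    (fun x hx => norm_sectorTwist_ofReal_mul_I_le <|
      (hr₀ x (le_of_max_le_left hx)).2.trans (by gcongr; exact le_max_right _ _))
  refine ⟨M, (eventually_ge_atTop r₁).mono fun r hr θ hθ => ?_⟩
  have hr0 : 0 ≤ r := hr₁.le.trans hr
  obtain ⟨hΔ₀, hΔ₁⟩ : 0 ≤ θ - θ₁ ∧ θ - θ₁ ≤ π / 2 := ⟨by linarith [hθ.1], by linarith [hθ.2]⟩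
  have hζ := hM (r * exp (↑(θ - θ₁) * I))
    (by rw [re_ofReal_mul, exp_ofReal_mul_I_re]
        exact mul_nonneg hr0 (Real.cos_nonneg_of_mem_Icc ⟨by linarith, hΔ₁⟩))
    (by rw [im_ofReal_mul, exp_ofReal_mul_I_im]
        exact mul_nonneg hr0 (Real.sin_nonneg_of_nonneg_of_le_pi hΔ₀ (by linarith)))
    (by rwa [norm_ofReal_mul_exp_ofReal_mul_I hr0])
  rwa [norm_sectorTwist_ofReal_mul_exp, add_sub_cancel, Real.exp_neg, ← div_eq_mul_inv,
    div_le_iff₀ (Real.exp_pos _)] at hζ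

lemma isBigO_alongRay_of_sector {F : ℂ → ℂ} {s B a b θ₁ θ : ℝ}
    (hd : DifferentiableOn ℂ F {z | s < ‖z‖}) (hB : ∀ z, s < ‖z‖ → ‖F z‖ ≤ Real.exp (B * ‖z‖))
    (ha : alongRay F θ₁ =O[atTop] fun r => Real.exp (a * r))
    (hb : alongRay F (θ₁ + π / 2) =O[atTop] fun r => Real.exp (b * r))
    (hθ : θ ∈ Icc θ₁ (θ₁ + π / 2)) :
    alongRay F θ =O[atTop]
      fun r => Real.exp ((a * Real.cos (θ - θ₁) + b * Real.sin (θ - θ₁)) * r) := by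
  obtain ⟨M, hM⟩ := exists_norm_le_of_sector hd hB ha hb
  exact .of_bound M (hM.mono fun r hr => by simpa using hr θ hθ)

/-- One round of the bootstrap: the sectors `[0, π/2]` and `[π/2, π]` bound the rays `π/4` and
`3π/4`, and the sector `[π/4, 3π/4]` then improves the exponent on the imaginary axis by `c`. -/
lemma isBigO_alongRay_pi_div_two_sub {F : ℂ → ℂ} {s B a c : ℝ}
    (hd : DifferentiableOn ℂ F {z | s < ‖z‖}) (hB : ∀ z, s < ‖z‖ → ‖F z‖ ≤ Real.exp (B * ‖z‖))
    (h₀ : alongRay F 0 =O[atTop] fun r => Real.exp (-c * r))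
    (hπ : alongRay F π =O[atTop] fun r => Real.exp (-c * r))
    (h : alongRay F (π / 2) =O[atTop] fun r => Real.exp (a * r)) :
    alongRay F (π / 2) =O[atTop] fun r => Real.exp ((a - c) * r) := by
  have hπ4 : π / 4 ∈ Icc 0 (0 + π / 2) := ⟨by positivity, by linarith [Real.pi_pos]⟩
  have h₁ : alongRay F (π / 4) =O[atTop] fun r => Real.exp ((a - c) * (√2 / 2) * r) := by
    convert isBigO_alongRay_of_sector hd hB h₀ (by rwa [zero_add]) hπ4 using 4
    rw [sub_zero, Real.cos_pi_div_four, Real.sin_pi_div_four]; ring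
  have h₃ : alongRay F (3 * π / 4) =O[atTop] fun r => Real.exp ((a - c) * (√2 / 2) * r) := by
    convert isBigO_alongRay_of_sector hd hB h (by rwa [add_halves]) (θ := 3 * π / 4)
      ⟨by linarith [Real.pi_pos], by linarith [Real.pi_pos]⟩ using 4
    rw [show 3 * π / 4 - π / 2 = π / 4 by ring, Real.cos_pi_div_four, Real.sin_pi_div_four]; ring
  convert isBigO_alongRay_of_sector hd hB h₁ (by rwa [show π / 4 + π / 2 = 3 * π / 4 by ring])
    (θ := π / 2) ⟨by linarith [Real.pi_pos], by linarith [Real.pi_pos]⟩ using 4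
  rw [show π / 2 - π / 4 = π / 4 by ring, Real.cos_pi_div_four, Real.sin_pi_div_four]
  linear_combination -(a - c) * Real.mul_self_sqrt (show (0 : ℝ) ≤ 2 by norm_num) / 2

lemma one_le_cos_add_sin {θ : ℝ} (h₀ : 0 ≤ θ) (h₁ : θ ≤ π / 2) : 1 ≤ Real.cos θ + Real.sin θ := by
  have hc := Real.cos_nonneg_of_mem_Icc ⟨by linarith, h₁⟩
  have hs := Real.sin_nonneg_of_nonneg_of_le_pi h₀ (by linarith)
  nlinarith [Real.sin_sq_add_cos_sq θ, mul_nonneg hc hs]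

lemma exists_norm_le_of_sector_of_decay {F : ℂ → ℂ} {s B c θ₁ : ℝ} (hc : 0 < c)
    (hd : DifferentiableOn ℂ F {z | s < ‖z‖}) (hB : ∀ z, s < ‖z‖ → ‖F z‖ ≤ Real.exp (B * ‖z‖))
    (ha : alongRay F θ₁ =O[atTop] fun r => Real.exp (-c * r))
    (hb : alongRay F (θ₁ + π / 2) =O[atTop] fun r => Real.exp (-c * r)) :
    ∃ M, ∀ᶠ r : ℝ in atTop, ∀ θ ∈ Icc θ₁ (θ₁ + π / 2),
      ‖alongRay F θ r‖ ≤ M * Real.exp (-c * r) := by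
  obtain ⟨M, hM⟩ := exists_norm_le_of_sector hd hB ha hb
  refine ⟨M, (hM.and (eventually_ge_atTop 0)).mono fun r ⟨hr, hr₀⟩ θ hθ => (hr θ hθ).trans ?_⟩
  have hM₀ : 0 ≤ M := nonneg_of_mul_nonneg_left ((norm_nonneg _).trans (hr θ hθ)) (Real.exp_pos _)
  have := one_le_cos_add_sin (sub_nonneg.2 hθ.1) (by linarith [hθ.2])
  gcongr
  nlinarith

lemma isBigO_alongRay_pi_div_two_of_decay {F : ℂ → ℂ} {s B c : ℝ} (hc : 0 < c)
    (hd : DifferentiableOn ℂ F {z | s < ‖z‖}) (hB : ∀ z, s < ‖z‖ → ‖F z‖ ≤ Real.exp (B * ‖z‖))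
    (h₀ : alongRay F 0 =O[atTop] fun r => Real.exp (-c * r))
    (hπ : alongRay F π =O[atTop] fun r => Real.exp (-c * r)) :
    alongRay F (π / 2) =O[atTop] fun r => Real.exp (-c * r) := by
  have hiter : ∀ n : ℕ, alongRay F (π / 2) =O[atTop] fun r => Real.exp ((B - n * c) * r) := by
    intro n
    induction n with
    | zero =>
      refine .of_bound 1 ((eventually_gt_atTop (max s 0)).mono fun r hr => ?_)
      have hr' := norm_ofReal_mul_exp_ofReal_mul_I (r := r) (by grind) (π / 2)
      have := hB _ (hr' ▸ lt_of_le_of_lt (le_max_left _ _) hr)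
      rw [hr'] at this
      rwa [one_mul, Real.norm_of_nonneg (Real.exp_pos _).le, Nat.cast_zero, zero_mul, sub_zero]
    | succ n ih =>
      convert isBigO_alongRay_pi_div_two_sub hd hB h₀ hπ ih using 4
      push_cast; ring
  obtain ⟨n, hn⟩ := exists_nat_ge ((B + c) / c)
  refine (hiter n).trans (Real.isBigO_exp_comp_exp_comp.2 ?_)
  refine isBoundedUnder_of_eventually_le (a := 0) ((eventually_ge_atTop 0).mono fun r hr => ?_)
  rw [div_le_iff₀ hc] at hn
  simp only [Pi.sub_apply]
  nlinarith

lemma exists_norm_le_of_im_nonneg {F : ℂ → ℂ} {s B c : ℝ} (hc : 0 < c)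
    (hd : DifferentiableOn ℂ F {z | s < ‖z‖}) (hB : ∀ z, s < ‖z‖ → ‖F z‖ ≤ Real.exp (B * ‖z‖))
    (hpos : (fun r : ℝ => F r) =O[atTop] fun r => Real.exp (-c * r))
    (hneg : (fun r : ℝ => F (-r)) =O[atTop] fun r => Real.exp (-c * r)) :
    ∃ M, ∀ᶠ z in cobounded ℂ, 0 ≤ z.im → ‖F z‖ ≤ M * Real.exp (-c * ‖z‖) := by
  have h₀ : alongRay F 0 =O[atTop] fun r => Real.exp (-c * r) := by
    rwa [show alongRay F 0 = fun r : ℝ => F r by ext r; simp [alongRay]]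
  have hπ : alongRay F π =O[atTop] fun r => Real.exp (-c * r) := by
    rwa [show alongRay F π = fun r : ℝ => F (-r) by ext r; simp [alongRay, exp_pi_mul_I]]
  have hmid := isBigO_alongRay_pi_div_two_of_decay hc hd hB h₀ hπ
  obtain ⟨M₁, hM₁⟩ := exists_norm_le_of_sector_of_decay hc hd hB h₀ (by rwa [zero_add])
  obtain ⟨M₂, hM₂⟩ := exists_norm_le_of_sector_of_decay hc hd hB hmid (by rwa [add_halves])
  refine ⟨max M₁ M₂, (tendsto_norm_cobounded_atTop.eventually (hM₁.and hM₂)).mono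
    fun z ⟨h₁, h₂⟩ him => ?_⟩
  have hz : alongRay F (arg z) ‖z‖ = F z := congrArg F (norm_mul_exp_arg_mul_I z)
  rw [← hz]
  rcases le_total (arg z) (π / 2) with h | h
  · exact (h₁ _ ⟨arg_nonneg_iff.2 him, by rwa [zero_add]⟩).trans (by gcongr; exact le_max_left _ _)
  · exact (h₂ _ ⟨h, by rw [add_halves]; exact arg_le_pi z⟩).trans
      (by gcongr; exact le_max_right _ _)

lemma isBigO_cobounded_of_decay_on_real_axis {F : ℂ → ℂ} {s B c : ℝ} (hc : 0 < c)
    (hd : DifferentiableOn ℂ F {z | s < ‖z‖}) (hB : ∀ z, s < ‖z‖ → ‖F z‖ ≤ Real.exp (B * ‖z‖))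
    (hpos : (fun r : ℝ => F r) =O[atTop] fun r => Real.exp (-c * r))
    (hneg : (fun r : ℝ => F (-r)) =O[atTop] fun r => Real.exp (-c * r)) :
    F =O[cobounded ℂ] fun z => Real.exp (-c * ‖z‖) := by
  obtain ⟨M₁, h₁⟩ := exists_norm_le_of_im_nonneg hc hd hB hpos hneg
  obtain ⟨M₂, h₂⟩ := exists_norm_le_of_im_nonneg (F := fun z => F (-z)) hc
    (hd.comp (by fun_prop) fun z hz => by rwa [mem_ofPred_eq, norm_neg])
    (fun z hz => by simpa using hB (-z) (by rwa [norm_neg])) (by simpa using hneg)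
    (by simpa using hpos)
  refine .of_bound (max M₁ M₂) ?_
  filter_upwards [h₁, tendsto_neg_cobounded.eventually h₂] with z hz₁ hz₂
  rw [Real.norm_of_nonneg (Real.exp_pos _).le]
  rcases le_total 0 z.im with h | h
  · exact (hz₁ h).trans (by gcongr; exact le_max_left _ _)
  · have := hz₂ (by simpa using h)
    simp only [neg_neg, norm_neg] at this
    exact this.trans (by gcongr; exact le_max_right _ _)

section Vanishing

variable {E : Type*} [NormedAddCommGroup E] [NormedSpace ℂ E]

lemma tendsto_zpow_smul_of_isBigO_exp_neg {F : ℂ → E} {c : ℝ} (hc : 0 < c)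
    (hF : F =O[cobounded ℂ] fun z => Real.exp (-c * ‖z‖)) (n : ℤ) :
    Tendsto (fun z => z ^ n • F z) (cobounded ℂ) (𝓝 0) := by
  obtain ⟨C, hC⟩ := hF.bound
  refine IsBigO.trans_tendsto (g'' := fun z => ‖z‖ ^ (n : ℝ) * Real.exp (-c * ‖z‖))
    (.of_bound C (hC.mono fun z hz => ?_))
    ((tendsto_rpow_mul_exp_neg_mul_atTop_nhds_zero n c hc).comp tendsto_norm_cobounded_atTop)
  rw [Real.norm_of_nonneg (Real.exp_pos _).le] at hz
  rw [norm_smul, norm_zpow, Real.rpow_intCast, Real.norm_of_nonneg (by positivity)]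
  calc ‖z‖ ^ n * ‖F z‖ ≤ ‖z‖ ^ n * (C * Real.exp (-c * ‖z‖)) := by gcongr
    _ = C * (‖z‖ ^ n * Real.exp (-c * ‖z‖)) := by ring

/-- `w ↦ F w⁻¹` extends continuously by `0` to `0`, so it is meromorphic at `0`; its trailing
coefficient is a limit of `w ^ n • F w⁻¹`, which vanishes for every `n`, so its order is `⊤`. -/
theorem eventually_eq_zero_of_isBigO_exp_neg [CompleteSpace E] {F : ℂ → E} {c : ℝ} (hc : 0 < c)
    (hd : ∀ᶠ z in cobounded ℂ, DifferentiableAt ℂ F z)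
    (hF : F =O[cobounded ℂ] fun z => Real.exp (-c * ‖z‖)) :
    ∀ᶠ z in cobounded ℂ, F z = 0 := by
  set g : ℂ → E := fun w => F w⁻¹
  have hpow : ∀ n : ℤ, Tendsto (fun w => w ^ n • g w) (𝓝[≠] 0) (𝓝 0) := fun n => by
    refine ((tendsto_zpow_smul_of_isBigO_exp_neg hc hF (-n)).comp tendsto_inv₀_nhdsNE_zero).congr
      fun w => ?_
    simp [g, inv_zpow']
  have hgd : ∀ᶠ w in 𝓝[≠] 0, DifferentiableAt ℂ (Function.update g 0 0) w := by
    filter_upwards [tendsto_inv₀_nhdsNE_zero.eventually hd, self_mem_nhdsWithin] with w hw hw0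
    refine (hw.comp w (differentiableAt_inv hw0)).congr_of_eventuallyEq ?_
    filter_upwards [isOpen_ne.mem_nhds hw0] with u hu
    exact Function.update_of_ne hu _ _
  have hg : MeromorphicAt g 0 :=
    (Complex.analyticAt_of_differentiable_on_punctured_nhds_of_continuousAt hgd
      (continuousAt_update_same.2 (by simpa using hpow 0))).meromorphicAt.congr
      (eventually_nhdsWithin_of_forall fun w hw => Function.update_of_ne hw _ _)
  have htop : meromorphicOrderAt g 0 = ⊤ := by
    by_contra h
    refine hg.meromorphicTrailingCoeffAt_ne_zero h
      (tendsto_nhds_unique hg.tendsto_nhds_meromorphicTrailingCoeffAt ?_)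
    exact (hpow (-(meromorphicOrderAt g 0).untop₀)).congr fun w => by simp [zpow_neg]
  filter_upwards [tendsto_inv₀_cobounded'.eventually (meromorphicOrderAt_eq_top_iff.1 htop)]
    with z hz
  simpa [g] using hz

end Vanishing

lemma isPreconnected_setOf_lt_norm {R : ℝ} (hR : 0 < R) : IsPreconnected {z : ℂ | R < ‖z‖} := by
  have : exp '' {w | Real.log R < w.re} = {z : ℂ | R < ‖z‖} := by
    ext z
    constructor
    · rintro ⟨w, hw, rfl⟩
      rw [mem_ofPred_eq, norm_exp, ← Real.exp_log hR]
      exact Real.exp_lt_exp.2 hw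
    · intro hz
      have hz0 : z ≠ 0 := norm_pos_iff.1 (hR.trans hz)
      exact ⟨log z, by rw [mem_ofPred_eq, log_re]; exact Real.log_lt_log hR hz, exp_log hz0⟩
  rw [← this]
  exact (convex_halfSpace_re_gt _).isPreconnected.image _ continuous_exp.continuousOn

lemma eqOn_zero_of_mul_comp_neg {E 𝕜 : Type*} [NontriviallyNormedField 𝕜]
    [NormedAddCommGroup E] [NormedSpace 𝕜 E] {U : Set E} {f : E → 𝕜}
    (hf : AnalyticOnNhd 𝕜 f U) (hU : IsPreconnected U) (hUo : IsOpen U) (hneg : ∀ z ∈ U, -z ∈ U)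
    (h : EqOn (fun z => f z * f (-z)) 0 U) : EqOn f 0 U := by
  by_contra hne
  obtain ⟨z₁, hz₁, hfz₁⟩ : ∃ z₁ ∈ U, f z₁ ≠ 0 := by simpa [EqOn] using hne
  have hV : IsOpen (U ∩ f ⁻¹' {0}ᶜ) :=
    hf.continuousOn.isOpen_inter_preimage hUo isOpen_compl_singleton
  have hzero : f =ᶠ[𝓝 (-z₁)] 0 := by
    filter_upwards [(hV.preimage continuous_neg).mem_nhds (by simpa using ⟨hz₁, hfz₁⟩)]
      with u ⟨hu, hfu⟩
    have := h hu
    simp only [Pi.zero_apply, neg_neg] at this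
    exact (mul_eq_zero.1 this).resolve_left hfu
  exact hne (hf.eqOn_zero_of_preconnected_of_eventuallyEq_zero hU (hneg z₁ hz₁) hzero)

lemma eqOn_zero_of_eventually_mul_comp_neg_eq_zero {R : ℝ} (hR : 0 < R) {f : ℂ → ℂ}
    (hf : DifferentiableOn ℂ f {z | R < ‖z‖}) (h : ∀ᶠ z in cobounded ℂ, f z * f (-z) = 0) :
    EqOn f 0 {z | R < ‖z‖} := by
  have hUo : IsOpen {z : ℂ | R < ‖z‖} := isOpen_lt continuous_const continuous_norm
  have hneg : ∀ z ∈ {z : ℂ | R < ‖z‖}, -z ∈ {z : ℂ | R < ‖z‖} := fun z hz => by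
    rwa [mem_ofPred_eq, norm_neg]
  have hfa := hf.analyticOnNhd hUo
  obtain ⟨r, -, hr⟩ := hasBasis_cobounded_norm.eventually_iff.1 h
  set ρ := max r R
  have hρ : ((ρ + 1 : ℝ) : ℂ) ∈ {z : ℂ | ρ < ‖z‖} := by
    rw [mem_ofPred_eq, norm_real, Real.norm_of_nonneg (by positivity)]; linarith
  refine eqOn_zero_of_mul_comp_neg hfa (isPreconnected_setOf_lt_norm hR) hUo hneg ?_
  have hprod : AnalyticOnNhd ℂ (fun z => f z * f (-z)) {z | R < ‖z‖} :=
    hfa.mul fun z hz => (hfa _ (hneg z hz)).comp analyticAt_id.neg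
  refine hprod.eqOn_zero_of_preconnected_of_eventuallyEq_zero (isPreconnected_setOf_lt_norm hR)
    (lt_of_le_of_lt (le_max_right r R) hρ) ?_
  filter_upwards [(isOpen_lt continuous_const continuous_norm).mem_nhds hρ] with z hz
  exact hr ((le_max_left r R).trans hz.le)

lemma isBigO_mul_comp_neg_of_indicatorFn_lt {f : ℂ → ℂ} {φ A B : ℝ} (hA : indicatorFn f φ < A)
    (hB : indicatorFn f (π + φ) < B) :
    (fun r : ℝ => f (exp (I * φ) * r) * f (-(exp (I * φ) * r))) =O[atTop]
      fun r => Real.exp ((A + B) * r) := by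
  refine .of_bound 1 ?_
  filter_upwards [eventually_norm_le_of_indicatorFn_lt hA,
    eventually_norm_le_of_indicatorFn_lt hB] with r h₁ h₂
  have e₂ : -(exp (I * φ) * r) = r * exp (I * ↑(π + φ)) := by
    rw [ofReal_add, mul_add, exp_add, mul_comm I π, exp_pi_mul_I]; ring
  rw [norm_mul, e₂, mul_comm (exp _), one_mul, Real.norm_of_nonneg (Real.exp_pos _).le, add_mul,
    Real.exp_add]
  exact mul_le_mul h₁ h₂ (norm_nonneg _) (Real.exp_pos _).le

lemma add_nonneg_of_indicatorFn_lt {R : ℝ} (hR : 0 < R) {f : ℂ → ℂ} (hf : ExpTypeOutsideDisc R f)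
    (hne : ∃ z : ℂ, R < ‖z‖ ∧ f z ≠ 0) {φ A B : ℝ} (hA : indicatorFn f φ < A)
    (hB : indicatorFn f (π + φ) < B) : 0 ≤ A + B := by
  obtain ⟨hd, σ, -, R', hRR', hgrow⟩ := hf
  by_contra! hAB
  set c := -(A + B)
  have hc : 0 < c := neg_pos.2 hAB
  set E := exp (I * φ)
  have hE0 : E ≠ 0 := exp_ne_zero _
  have hE1 : ‖E‖ = 1 := norm_exp_I_mul_ofReal φ
  have hE : ∀ z, ‖E * z‖ = ‖z‖ := fun z => by rw [norm_mul, hE1, one_mul]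
  have hd' : DifferentiableOn ℂ f {z | R' < ‖z‖} := hd.mono fun z hz => lt_of_le_of_lt hRR' hz
  set P : ℂ → ℂ := fun z => f (E * z) * f (-(E * z))
  have hPd : DifferentiableOn ℂ P {z | R' < ‖z‖} :=
    (hd'.comp (by fun_prop) fun z hz => by rwa [mem_ofPred_eq, hE]).mul
      (hd'.comp (by fun_prop) fun z hz => by rwa [mem_ofPred_eq, norm_neg, hE])
  have hPB : ∀ z, R' < ‖z‖ → ‖P z‖ ≤ Real.exp (2 * σ * ‖z‖) := fun z hz => by
    have h₁ := hgrow (E * z) (by rwa [hE])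
    have h₂ := hgrow (-(E * z)) (by rwa [norm_neg, hE])
    rw [hE] at h₁; rw [norm_neg, hE] at h₂
    rw [norm_mul, two_mul, add_mul, Real.exp_add]
    exact mul_le_mul h₁.le h₂.le (norm_nonneg _) (Real.exp_pos _).le
  have hPpos : (fun r : ℝ => P r) =O[atTop] fun r => Real.exp (-c * r) := by
    simpa only [c, neg_neg] using isBigO_mul_comp_neg_of_indicatorFn_lt hA hB
  have hPeven : ∀ z, P (-z) = P z := fun z => by simp only [P, mul_neg, neg_neg]; ring
  have hPzero := eventually_eq_zero_of_isBigO_exp_neg hc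
    ((eventually_cobounded_le_norm (R' + 1)).mono fun z hz =>
      hPd.differentiableAt ((isOpen_lt continuous_const continuous_norm).mem_nhds
        (by rw [mem_ofPred_eq]; linarith)))
    (isBigO_cobounded_of_decay_on_real_axis hc hPd hPB hPpos
      (by simpa only [hPeven] using hPpos))
  have hrot : Tendsto (fun u => E⁻¹ * u) (cobounded ℂ) (cobounded ℂ) :=
    tendsto_norm_atTop_iff_cobounded.1 (by simpa [hE1] using tendsto_norm_cobounded_atTop)
  have hprod : ∀ᶠ u in cobounded ℂ, f u * f (-u) = 0 :=
    (hrot.eventually hPzero).mono fun u hu => by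
      rwa [show P (E⁻¹ * u) = f u * f (-u) by simp only [P, mul_inv_cancel_left₀ hE0]] at hu
  obtain ⟨z, hz, hfz⟩ := hne
  exact hfz (eqOn_zero_of_eventually_mul_comp_neg_eq_zero hR hd hprod hz)

/-- **The indicator function of a function of exponential type holomorphic outside a disc
satisfies `h_f(φ) + h_f(π + φ) ≥ 0`** (the classical inequality for entire functions,
proved via Phragmén–Lindelöf, continues to hold in this setting). -/
theorem indicator_add_pi_nonneg
    (R : ℝ) (hR : 0 < R) (f : ℂ → ℂ)
    (hf : ExpTypeOutsideDisc R f)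
    (hne : ∃ z : ℂ, R < ‖z‖ ∧ f z ≠ 0) :
    ∀ φ ∈ Set.Icc (0 : ℝ) Real.pi,
      0 ≤ indicatorFn f φ + indicatorFn f (Real.pi + φ) := by
  intro φ _
  refine EReal.le_add_of_forall_gt (.inr (hf.indicatorFn_ne_top _))
    (.inl (hf.indicatorFn_ne_top _)) fun a ha b hb => ?_
  obtain ⟨A, hA, hAa⟩ := EReal.exists_between_coe_real ha
  obtain ⟨B, hB, hBb⟩ := EReal.exists_between_coe_real hb
  calc (0 : EReal) ≤ ↑(A + B) := EReal.coe_nonneg.2 (add_nonneg_of_indicatorFn_lt hR hf hne hA hB)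
    _ ≤ a + b := by rw [EReal.coe_add]; exact add_le_add hAa.le hBb.le
end
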